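/- Let E be a directed graph. Every admissible pair (H,S) in T_E* equals the join of the family of admissible pairs {(H_u, ∅) : u ∈ H} ∪ {(H, {v}) : v ∈ S}; that is, (H,S) = ⋁_{u∈H} (H_u, ∅) ∨ ⋁_{v∈S} (H, {v}). -/

import Mathlib

namespace LPAQuot

/-- A directed graph `E = (E⁰, E¹, s, r)` with vertex type `V` and edge type `E`. -/
structure Graph (V E : Type) where
  s : E → V
  r : E → V

namespace Graph

variable {V E R : Type} [CommRing R] (G : Graph V E)

/-- `u` reaches `w` through a (possibly trivial) path. -/
def Reaches (u w : V) : Prop :=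
  Relation.ReflTransGen (fun a b => ∃ e, G.s e = a ∧ G.r e = b) u w

/-- A set of vertices is hereditary if it is closed under ranges of paths. -/
def IsHereditary (H : Set V) : Prop :=
  ∀ ⦃u w : V⦄, u ∈ H → G.Reaches u w → w ∈ H

/-- A vertex is regular if `0 < |s⁻¹(v)| < ∞`. -/
def IsRegular (v : V) : Prop :=
  {e | G.s e = v}.Finite ∧ {e | G.s e = v}.Nonempty

/-- A vertex is an infinite emitter if `|s⁻¹(v)| = ∞`. -/
def IsInfiniteEmitter (v : V) : Prop := {e | G.s e = v}.Infinite

/-- A hereditary set is saturated if every regular vertex all of whose emitted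
edges have range in `H` lies in `H`. -/
def IsSaturated (H : Set V) : Prop :=
  ∀ ⦃v : V⦄, G.IsRegular v → (∀ e, G.s e = v → G.r e ∈ H) → v ∈ H

/-- Hereditary and saturated. -/
def IsHS (H : Set V) : Prop := G.IsHereditary H ∧ G.IsSaturated H

/-- `v` is a breaking vertex of `H`: an infinite emitter `v ∉ H` with
`0 < |s⁻¹(v) ∩ r⁻¹(E⁰∖H)| < ∞`. -/
def IsBreaking (H : Set V) (v : V) : Prop :=
  G.IsInfiniteEmitter v ∧ v ∉ H ∧
    {e | G.s e = v ∧ G.r e ∉ H}.Finite ∧ {e | G.s e = v ∧ G.r e ∉ H}.Nonempty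

/-- `H'` is `S`-closed: if `v ∈ S` and `r(s⁻¹(v)) ⊆ H'` then `v ∈ H'`. -/
def SClosed (S H' : Set V) : Prop :=
  ∀ v ∈ S, (∀ e, G.s e = v → G.r e ∈ H') → v ∈ H'

/-- The `S`-saturation of `H`: the smallest hereditary saturated `S`-closed set
containing `H`. -/
def SSat (H S : Set V) : Set V :=
  ⋂₀ {H' | H ⊆ H' ∧ G.IsHS H' ∧ G.SClosed S H'}

/-- `H_v`, the intersection of all hereditary saturated sets containing `v`. -/
def Hv (v : V) : Set V := ⋂₀ {H | G.IsHS H ∧ v ∈ H}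

lemma mem_Hv (v : V) : v ∈ G.Hv v := by
  simp only [Hv, Set.mem_sInter, Set.mem_setOf_eq]
  exact fun H hH => hH.2

lemma Hv_hereditary (v : V) : G.IsHereditary (G.Hv v) := by
  intro u w hu hw
  simp only [Hv, Set.mem_sInter, Set.mem_setOf_eq] at hu ⊢
  exact fun H hH => hH.1.1 (hu H hH) hw

lemma Hv_saturated (v : V) : G.IsSaturated (G.Hv v) := by
  intro w hw hr
  simp only [Hv, Set.mem_sInter, Set.mem_setOf_eq]
  intro H hH
  refine hH.1.2 hw fun e he => ?_
  have h := hr e he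
  simp only [Hv, Set.mem_sInter, Set.mem_setOf_eq] at h
  exact h H hH

/-- An admissible pair `(H, S)` other than `(∅, ∅)`; i.e. an element of `T_E^*`. -/
structure APair (Γ : Graph V E) where
  H : Set V
  S : Set V
  hered : Γ.IsHereditary H
  sat : Γ.IsSaturated H
  breaking : ∀ v ∈ S, Γ.IsBreaking H v
  nontrivial : H.Nonempty ∨ S.Nonempty

/-- The first component `𝔥` of the join of a family of admissible pairs:
the `(⋃ᵢ Sᵢ)`-saturation of `⋃ᵢ Hᵢ`. -/
def joinH {ι : Type} (P : ι → G.APair) : Set V :=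
  G.SSat (⋃ i, (P i).H) (⋃ i, (P i).S)

/-- The second component `𝔰 = (⋃ᵢ Sᵢ) ∖ 𝔥` of the join of a family of admissible pairs. -/
def joinS {ι : Type} (P : ι → G.APair) : Set V :=
  (⋃ i, (P i).S) \ G.joinH P

/-- First component of the binary join `(H₁,S₁) ∨ (H₂,S₂)`. -/
def join2H (p₁ p₂ : G.APair) : Set V := G.SSat (p₁.H ∪ p₂.H) (p₁.S ∪ p₂.S)

/-- Second component of the binary join `(H₁,S₁) ∨ (H₂,S₂)`. -/
def join2S (p₁ p₂ : G.APair) : Set V := (p₁.S ∪ p₂.S) \ G.join2H p₁ p₂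

/-- A saturated function `f : T_E^* → L(R)`:
`f(⋁ᵢ (Hᵢ,Sᵢ)) = ⋂ᵢ f((Hᵢ,Sᵢ))` for every family of admissible pairs. -/
def IsSaturatedFun (f : G.APair → Ideal R) : Prop :=
  ∀ (ι : Type) (P : ι → G.APair) (q : G.APair),
    q.H = G.joinH P → q.S = G.joinS P → f q = ⨅ i, f (P i)

/-- The set `Ê⁰` of extended vertices: vertices together with symbols `v^H`
for `H` hereditary saturated and `v ∈ B_H`. -/
abbrev ExtVertex (Γ : Graph V E) : Type :=
  V ⊕ {p : Set V × V // Γ.IsHS p.1 ∧ Γ.IsBreaking p.1 p.2}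

/-- The admissible pair `(H_u, ∅)`. -/
def pairOfVertex (u : V) : G.APair where
  H := G.Hv u
  S := ∅
  hered := G.Hv_hereditary u
  sat := G.Hv_saturated u
  breaking := fun v hv => absurd hv (Set.notMem_empty v)
  nontrivial := Or.inl ⟨u, G.mem_Hv u⟩

/-- The admissible pair `(H, {v})` for `v ∈ B_H`. -/
def pairOfBreaking (H : Set V) (v : V) (hH : G.IsHS H) (hv : G.IsBreaking H v) :
    G.APair where
  H := H
  S := {v}
  hered := hH.1
  sat := hH.2
  breaking := fun w hw => by
    rw [Set.mem_singleton_iff] at hw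
    subst hw
    exact hv
  nontrivial := Or.inr ⟨v, rfl⟩

/-- The function `φ_f : Ê⁰ → L(R)` associated to a saturated function `f`:
`φ_f(u) = f((H_u, ∅))` and `φ_f(v^H) = f((H, {v}))`. -/
def phiOf (f : G.APair → Ideal R) : G.ExtVertex → Ideal R :=
  Sum.elim (fun u => f (G.pairOfVertex u))
    (fun p => f (G.pairOfBreaking p.1.1 p.1.2 p.2.1 p.2.2))

/-- `⋂_{u∈H} φ(u) ∩ ⋂_{v∈S} φ(v^H)`, that is, `f_φ((H,S))`. -/
def phiPair (φ : G.ExtVertex → Ideal R) (p : G.APair) : Ideal R :=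
  (⨅ u : p.H, φ (Sum.inl u.1)) ⊓
    ⨅ v : p.S, φ (Sum.inr ⟨(p.H, v.1), ⟨p.hered, p.sat⟩, p.breaking v.1 v.2⟩)

/-- The function `f_φ : T_E^* → L(R)` associated to `φ : Ê⁰ → L(R)`. -/
def satFunOf (φ : G.ExtVertex → Ideal R) : G.APair → Ideal R :=
  fun p => G.phiPair φ p

/-- A graded ideal function `φ : Ê⁰ → L(R)`: it satisfies
(i) `⋂_{u∈𝔥} φ(u) ∩ ⋂_{v∈𝔰} φ(v^𝔥)` splits over binary joins,
(ii) `H_v ⊆ H_u` implies `φ(u) ⊆ φ(v)`,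
(iii) `φ(v^H) ⊆ ⋂_{w∈H} φ(w)`. -/
def IsGradedIdealFun (φ : G.ExtVertex → Ideal R) : Prop :=
  (∀ p₁ p₂ q : G.APair, q.H = G.join2H p₁ p₂ → q.S = G.join2S p₁ p₂ →
      G.phiPair φ q = G.phiPair φ p₁ ⊓ G.phiPair φ p₂) ∧
  (∀ u v : V, G.Hv v ⊆ G.Hv u → φ (Sum.inl u) ≤ φ (Sum.inl v)) ∧
  (∀ (H : Set V) (hH : G.IsHS H) (v : V) (hv : G.IsBreaking H v),
      φ (Sum.inr ⟨(H, v), hH, hv⟩) ≤ ⨅ w : H, φ (Sum.inl w.1))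

/-- The extended order `x ≥ y` on `Ê⁰`: on vertices it is the path order, each
breaking vertex `v` lies above the symbol `v^H`, and the symbols `v^H` are sinks. -/
def extGE (Γ : Graph V E) : Γ.ExtVertex → Γ.ExtVertex → Prop
  | Sum.inl u, Sum.inl w => Γ.Reaches u w
  | Sum.inl u, Sum.inr p => Γ.Reaches u p.1.2
  | Sum.inr _, Sum.inl _ => False
  | Sum.inr p, Sum.inr q => p = q

lemma sSat_subset {H S H' : Set V} (hHH' : H ⊆ H') (hH' : G.IsHS H') (hS : G.SClosed S H') :
    G.SSat H S ⊆ H' :=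
  Set.sInter_subset_of_mem ⟨hHH', hH', hS⟩

lemma subset_sSat (H S : Set V) : H ⊆ G.SSat H S :=
  Set.subset_sInter fun _ hH' => hH'.1

lemma Hv_subset {H : Set V} (hH : G.IsHS H) {u : V} (hu : u ∈ H) : G.Hv u ⊆ H :=
  Set.sInter_subset_of_mem ⟨hH, hu⟩

lemma iUnion_Hv {H : Set V} (hH : G.IsHS H) : ⋃ u : H, G.Hv u = H :=
  (Set.iUnion_subset fun u => G.Hv_subset hH u.2).antisymm
    fun u hu => Set.mem_iUnion.mpr ⟨⟨u, hu⟩, G.mem_Hv u⟩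

-- A breaking vertex of `H` emits an edge leaving `H`.
lemma sClosed_of_isBreaking {H S : Set V} (hS : ∀ v ∈ S, G.IsBreaking H v) : G.SClosed S H := by
  intro v hv hrange
  obtain ⟨-, -, -, e, hse, hre⟩ := hS v hv
  exact absurd (hrange e hse) hre

lemma joinS_eq_of_joinH_eq {ι : Type} (P : ι → G.APair) (p : G.APair)
    (hH : G.joinH P = p.H) (hS : ⋃ i, (P i).S = p.S) : G.joinS P = p.S := by
  rw [joinS, hH, hS]
  exact sdiff_eq_left.mpr <| Set.disjoint_left.mpr fun v hv => (p.breaking v hv).2.1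

def decompFamily (p : G.APair) : p.H ⊕ p.S → G.APair :=
  Sum.elim (fun u => G.pairOfVertex u.1)
    (fun v => G.pairOfBreaking p.H v.1 ⟨p.hered, p.sat⟩ (p.breaking v.1 v.2))

lemma iUnion_decompFamily_H (p : G.APair) : ⋃ i, (G.decompFamily p i).H = p.H := by
  simp only [decompFamily, Set.iUnion_sum, Sum.elim_inl, Sum.elim_inr, pairOfVertex,
    pairOfBreaking]
  rw [G.iUnion_Hv ⟨p.hered, p.sat⟩]
  exact Set.union_eq_left.mpr (Set.iUnion_subset fun _ => subset_rfl)

lemma iUnion_decompFamily_S (p : G.APair) : ⋃ i, (G.decompFamily p i).S = p.S := by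
  simp only [decompFamily, Set.iUnion_sum, Sum.elim_inl, Sum.elim_inr, pairOfVertex,
    pairOfBreaking, Set.iUnion_empty, Set.empty_union]
  exact Set.iUnion_of_singleton_coe p.S

lemma joinH_decompFamily (p : G.APair) : G.joinH (G.decompFamily p) = p.H := by
  rw [joinH, G.iUnion_decompFamily_H, G.iUnion_decompFamily_S]
  exact (G.sSat_subset subset_rfl ⟨p.hered, p.sat⟩ (G.sClosed_of_isBreaking p.breaking)).antisymm
    (G.subset_sSat _ _)

/-- Every admissible pair `(H,S) ∈ T_E^*` equals the join of the
family `{(H_u, ∅) : u ∈ H} ∪ {(H, {v}) : v ∈ S}`. -/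
theorem statement_13 (p : G.APair) :
    p.H = G.joinH (Sum.elim (fun u : ↥p.H => G.pairOfVertex u.1)
        (fun v : ↥p.S => G.pairOfBreaking p.H v.1 ⟨p.hered, p.sat⟩ (p.breaking v.1 v.2))) ∧
    p.S = G.joinS (Sum.elim (fun u : ↥p.H => G.pairOfVertex u.1)
        (fun v : ↥p.S => G.pairOfBreaking p.H v.1 ⟨p.hered, p.sat⟩ (p.breaking v.1 v.2))) :=
  have hH := G.joinH_decompFamily p
  ⟨hH.symm, (G.joinS_eq_of_joinH_eq _ p hH (G.iUnion_decompFamily_S p)).symm⟩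

end Graph

end LPAQuot
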